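/- Define the colorful h-index h̄(G) as the greatest natural number h such that at least h vertices v of G satisfy min(D_a(v), D_b(v)) ≥ h. Then every clique S of G with |cnt_S(a) − cnt_S(b)| ≤ δ and cnt_S(a) ≥ 1, cnt_S(b) ≥ 1 satisfies |S| ≤ 2·h̄(G) + δ + 2. -/

import Mathlib

/-!
A properly coloured clique `S` gives every one of its vertices `|S_t| - 1` distinct colours among
its `t`-neighbours, for both attributes `t`. Hence all `|S|` vertices of `S` witness
`h̄(G) ≥ m - 1`, where `m` is the smaller of the two attribute counts of `S`, and balance gives
`|S| ≤ 2m + δ`.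
-/

/-- The colorful h-index of a graph: the greatest `h` such that at least `h`
vertices `v` satisfy `min (D_a v) (D_b v) ≥ h`, where `D_t v` is the number of
distinct colors among the neighbors of `v` having attribute `t`. -/
noncomputable def colorfulHIndex {V : Type*} [Fintype V] [DecidableEq V]
    (G : SimpleGraph V) [DecidableRel G.Adj]
    (c : V → ℕ) (A : V → Bool) : ℕ :=
  sSup {h : ℕ | h ≤ (Finset.univ.filter (fun v : V =>
    h ≤ min (((G.neighborFinset v).filter (fun w => A w = true)).image c).card
            (((G.neighborFinset v).filter (fun w => A w = false)).image c).card)).card}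

namespace SimpleGraph

variable {V : Type*} {G : SimpleGraph V}

theorem IsClique.injOn_of_adj_ne {α : Type*} {S : Set V} (hS : G.IsClique S) {c : V → α}
    (hc : ∀ u v : V, G.Adj u v → c u ≠ c v) : Set.InjOn c S :=
  fun u hu w hw huw => by_contra fun hne => hc u w (hS hu hw hne) huw

variable [Fintype V] [DecidableEq V] [DecidableRel G.Adj]

variable (G) in
/-- `D_t(v)`. -/
def colorDegree (c : V → ℕ) (A : V → Bool) (v : V) (t : Bool) : ℕ :=
  (((G.neighborFinset v).filter (fun w => A w = t)).image c).card

theorem le_colorfulHIndex {c : V → ℕ} {A : V → Bool} {h : ℕ} (T : Finset V) (hT : h ≤ T.card)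
    (hdeg : ∀ v ∈ T, h ≤ G.colorDegree c A v true ∧ h ≤ G.colorDegree c A v false) :
    h ≤ colorfulHIndex G c A := by
  refine le_csSup ⟨Fintype.card V, fun k hk => hk.trans (Finset.card_le_univ _)⟩ ?_
  refine hT.trans (Finset.card_le_card fun v hv => ?_)
  simpa [colorDegree] using hdeg v hv

theorem IsClique.card_filter_sub_one_le_card_image_neighborFinset {α : Type*} [DecidableEq α]
    {S : Finset V} (hS : G.IsClique (S : Set V)) {c : V → α}
    (hc : ∀ u v : V, G.Adj u v → c u ≠ c v) {v : V} (hv : v ∈ S) (p : V → Prop)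
    [DecidablePred p] :
    (S.filter p).card - 1 ≤ (((G.neighborFinset v).filter p).image c).card := by
  have hsub : (S.filter p).erase v ⊆ (G.neighborFinset v).filter p := by
    intro w hw
    obtain ⟨hwv, hwS, hpw⟩ : w ≠ v ∧ w ∈ S ∧ p w := by simpa using hw
    simpa [hpw] using (hS hwS hv hwv).symm
  have hinj : Set.InjOn c ((S.filter p).erase v : Set V) :=
    (hS.injOn_of_adj_ne hc).mono fun w hw => by simp_all
  calc (S.filter p).card - 1
      ≤ ((S.filter p).erase v).card := Finset.pred_card_le_card_erase
    _ = (((S.filter p).erase v).image c).card := (Finset.card_image_of_injOn hinj).symm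
    _ ≤ (((G.neighborFinset v).filter p).image c).card :=
        Finset.card_le_card (Finset.image_subset_image hsub)

theorem IsClique.min_card_filter_sub_one_le_colorfulHIndex {S : Finset V}
    (hS : G.IsClique (S : Set V)) {c : V → ℕ} (hc : ∀ u v : V, G.Adj u v → c u ≠ c v)
    (A : V → Bool) :
    min (S.filter (fun v => A v = true)).card (S.filter (fun v => A v = false)).card - 1 ≤
      colorfulHIndex G c A := by
  have hdeg (v : V) (hv : v ∈ S) (t : Bool) :
      (S.filter (fun w => A w = t)).card - 1 ≤ G.colorDegree c A v t :=
    hS.card_filter_sub_one_le_card_image_neighborFinset hc hv _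
  refine le_colorfulHIndex S ((Nat.sub_le _ _).trans ((min_le_left _ _).trans
    (Finset.card_filter_le _ _))) fun v hv => ⟨?_, ?_⟩
  · exact (Nat.sub_le_sub_right (min_le_left _ _) 1).trans (hdeg v hv true)
  · exact (Nat.sub_le_sub_right (min_le_right _ _) 1).trans (hdeg v hv false)

end SimpleGraph

theorem Finset.card_filter_true_add_card_filter_false {α : Type*} (S : Finset α) (A : α → Bool) :
    (S.filter (fun v => A v = true)).card + (S.filter (fun v => A v = false)).card = S.card := by
  simpa only [Bool.not_eq_true] using S.card_filter_add_card_filter_not (fun v => A v = true)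

theorem Nat.add_le_two_mul_min_add_of_abs_sub_le {a b δ : ℕ} (h : |(a : ℤ) - b| ≤ δ) :
    a + b ≤ 2 * min a b + δ := by
  rw [abs_le] at h
  omega

/-- colorful-h-index-based upper bound: every clique `S` whose
attribute counts differ by at most `δ` and which contains at least one vertex
of each attribute satisfies `|S| ≤ 2 * h̄(G) + δ + 2`. -/
theorem stmt_14 {V : Type*} [Fintype V] [DecidableEq V]
    (G : SimpleGraph V) [DecidableRel G.Adj]
    (c : V → ℕ) (hc : ∀ u v : V, G.Adj u v → c u ≠ c v)
    (A : V → Bool) (δ : ℕ) :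
    ∀ S : Finset V, G.IsClique (S : Set V) →
      |((S.filter (fun v => A v = true)).card : ℤ) -
        ((S.filter (fun v => A v = false)).card : ℤ)| ≤ (δ : ℤ) →
      1 ≤ (S.filter (fun v => A v = true)).card →
      1 ≤ (S.filter (fun v => A v = false)).card →
      S.card ≤ 2 * colorfulHIndex G c A + δ + 2 := by
  intro S hS hbal _ _
  have hh := hS.min_card_filter_sub_one_le_colorfulHIndex hc A
  have hcard := Nat.add_le_two_mul_min_add_of_abs_sub_le hbal
  rw [S.card_filter_true_add_card_filter_false A] at hcard
  omega
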